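/- Purity ratio bound: Let ξ_AB be a positive semidefinite operator on H_A ⊗ H_B and ξ_B = tr_A(ξ_AB). Then tr[ξ_B²] ≤ |A| · tr[ξ_AB²] and tr[ξ_AB²] ≤ |A| · tr[ξ_B²]. -/

import Mathlib

/-!
For the first inequality, `tr M² = ∑ ‖M_pq‖²` for Hermitian `M`, and Cauchy–Schwarz on
`(ξ_B)_ij = ∑ₖ ξ_(k,i),(k,j)` gives `‖(ξ_B)_ij‖² ≤ |A| ∑ₖ ‖ξ_(k,i),(k,j)‖²`.

For the second, `ξ ≤ |A| • (1 ⊗ ξ_B)` in the Loewner order: splitting `v = ∑ₐ eₐ ⊗ vₐ`,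
Cauchy–Schwarz for the positive form of `ξ` gives `v* ξ v ≤ |A| ∑ₐ vₐ* ξ_aa vₐ`, and each diagonal
block `ξ_aa` is dominated by `∑ₖ ξ_kk = ξ_B`. Multiplying by `ξ ≥ 0` under the trace and using
`tr[ξ (1 ⊗ ξ_B)] = tr ξ_B²` concludes.
-/

open scoped Kronecker ComplexOrder Classical
open Matrix MeasureTheory

noncomputable section

/-- Positive semidefinite square root (junk value `0` if not PSD). -/
def psqrt {n : Type*} [Fintype n] [DecidableEq n] (ρ : Matrix n n ℂ) : Matrix n n ℂ :=
  if h : ρ.PosSemidef then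
    (h.1.eigenvectorUnitary : Matrix n n ℂ) *
      Matrix.diagonal (fun i => ((Real.sqrt (h.1.eigenvalues i) : ℝ) : ℂ)) *
      (star h.1.eigenvectorUnitary : Matrix n n ℂ)
  else 0

/-- Trace norm `‖M‖₁ = tr √(MᴴM)`. -/
def traceNorm {n : Type*} [Fintype n] [DecidableEq n] (M : Matrix n n ℂ) : ℝ :=
  (psqrt (Mᴴ * M)).trace.re

/-- Moore–Penrose real power of a Hermitian matrix via the spectral decomposition
(junk value `0` for non-Hermitian input).  For negative exponents, zero eigenvalues are
sent to zero (`Real.rpow` convention), i.e. inverses are generalized inverses. -/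
def mpow {n : Type*} [Fintype n] [DecidableEq n] (ρ : Matrix n n ℂ) (p : ℝ) : Matrix n n ℂ :=
  if h : ρ.IsHermitian then
    (h.eigenvectorUnitary : Matrix n n ℂ) *
      Matrix.diagonal (fun i => ((h.eigenvalues i ^ p : ℝ) : ℂ)) *
      (star h.eigenvectorUnitary : Matrix n n ℂ)
  else 0

/-- Subnormalized state: positive semidefinite with trace at most one. -/
def IsSubnormalized {n : Type*} [Fintype n] (ρ : Matrix n n ℂ) : Prop :=
  ρ.PosSemidef ∧ ρ.trace.re ≤ 1

/-- Normalized state: positive semidefinite with trace one. -/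
def IsState {n : Type*} [Fintype n] (ρ : Matrix n n ℂ) : Prop :=
  ρ.PosSemidef ∧ ρ.trace = 1

/-- Fidelity `F(ρ,σ) = ‖√ρ √σ‖₁`. -/
def fidelity {n : Type*} [Fintype n] [DecidableEq n] (ρ σ : Matrix n n ℂ) : ℝ :=
  traceNorm (psqrt ρ * psqrt σ)

/-- Generalized fidelity of subnormalized states. -/
def gFidelity {n : Type*} [Fintype n] [DecidableEq n] (ρ σ : Matrix n n ℂ) : ℝ :=
  fidelity ρ σ + Real.sqrt ((1 - ρ.trace.re) * (1 - σ.trace.re))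

/-- Purified distance `P(ρ,σ) = √(1 − F̄(ρ,σ)²)`. -/
def pdist {n : Type*} [Fintype n] [DecidableEq n] (ρ σ : Matrix n n ℂ) : ℝ :=
  Real.sqrt (1 - gFidelity ρ σ ^ 2)

/-- Partial trace over the first tensor factor. -/
def ptraceFst {a b : Type*} [Fintype a] (M : Matrix (a × b) (a × b) ℂ) : Matrix b b ℂ :=
  Matrix.of fun i j => ∑ k, M (k, i) (k, j)

/-- Partial trace over the second tensor factor. -/
def ptraceSnd {a b : Type*} [Fintype b] (M : Matrix (a × b) (a × b) ℂ) : Matrix a a ℂ :=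
  Matrix.of fun i j => ∑ k, M (i, k) (j, k)

/-- Min-entropy `H_min(A|B)_ρ`, conditioning on the second factor. -/
def Hmin {a b : Type*} [Fintype a] [Fintype b] [DecidableEq a] [DecidableEq b]
    (ρ : Matrix (a × b) (a × b) ℂ) : ℝ :=
  sSup {x : ℝ | ∃ σ : Matrix b b ℂ, IsState σ ∧
    (((2 : ℝ) ^ (-x) : ℝ) • ((1 : Matrix a a ℂ) ⊗ₖ σ) - ρ).PosSemidef}

/-- Max-entropy `H_max(A|B)_ρ`, conditioning on the second factor. -/
def Hmax {a b : Type*} [Fintype a] [Fintype b] [DecidableEq a] [DecidableEq b]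
    (ρ : Matrix (a × b) (a × b) ℂ) : ℝ :=
  sSup {x : ℝ | ∃ σ : Matrix b b ℂ, IsState σ ∧
    x = Real.logb 2 (fidelity ρ ((1 : Matrix a a ℂ) ⊗ₖ σ) ^ 2)}

/-- Smooth min-entropy `H_min^ε(A|B)_ρ`. -/
def sHmin {a b : Type*} [Fintype a] [Fintype b] [DecidableEq a] [DecidableEq b]
    (ε : ℝ) (ρ : Matrix (a × b) (a × b) ℂ) : ℝ :=
  sSup {x : ℝ | ∃ ρ' : Matrix (a × b) (a × b) ℂ,
    IsSubnormalized ρ' ∧ pdist ρ ρ' ≤ ε ∧ x = Hmin ρ'}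

/-- Unconditional min-entropy `H_min(A)_ρ = −log‖ρ‖_∞`. -/
def HminU {n : Type*} [Fintype n] [DecidableEq n] (ρ : Matrix n n ℂ) : ℝ :=
  -Real.logb 2 ‖Matrix.toEuclideanCLM (𝕜 := ℂ) ρ‖

/-- Unconditional max-entropy `H_max(A)_ρ = 2 log tr √ρ`. -/
def HmaxU {n : Type*} [Fintype n] [DecidableEq n] (ρ : Matrix n n ℂ) : ℝ :=
  2 * Real.logb 2 ((psqrt ρ).trace.re)

/-- Smooth unconditional min-entropy. -/
def sHminU {n : Type*} [Fintype n] [DecidableEq n] (ε : ℝ) (ρ : Matrix n n ℂ) : ℝ :=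
  sSup {x : ℝ | ∃ ρ' : Matrix n n ℂ, IsSubnormalized ρ' ∧ pdist ρ ρ' ≤ ε ∧ x = HminU ρ'}

/-- Smooth unconditional max-entropy. -/
def sHmaxU {n : Type*} [Fintype n] [DecidableEq n] (ε : ℝ) (ρ : Matrix n n ℂ) : ℝ :=
  sInf {x : ℝ | ∃ ρ' : Matrix n n ℂ, IsSubnormalized ρ' ∧ pdist ρ ρ' ≤ ε ∧ x = HmaxU ρ'}

/-- Collision entropy `H₂(A|B)_ρ`. -/
def H2 {a b : Type*} [Fintype a] [Fintype b] [DecidableEq a] [DecidableEq b]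
    (ρ : Matrix (a × b) (a × b) ℂ) : ℝ :=
  sSup {x : ℝ | ∃ σ : Matrix b b ℂ, IsState σ ∧
    x = -Real.logb 2
      (((((1 : Matrix a a ℂ) ⊗ₖ mpow σ (-(1/4))) * ρ *
          ((1 : Matrix a a ℂ) ⊗ₖ mpow σ (-(1/4)))) ^ 2).trace.re)}

/-- The extension `𝟙_n ⊗ T` of a linear map `T` on matrices, acting on the second factor. -/
def idTensorLmap {A B n : Type*} [Fintype A] [Fintype B] [Fintype n]
    (T : Matrix A A ℂ →ₗ[ℂ] Matrix B B ℂ) (M : Matrix (n × A) (n × A) ℂ) :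
    Matrix (n × B) (n × B) ℂ :=
  Matrix.of fun i j => T (Matrix.of fun a a' => M (i.1, a) (j.1, a')) i.2 j.2

/-- The extension `T ⊗ 𝟙_n` of a linear map `T` on matrices, acting on the first factor. -/
def lmapTensorId {A B n : Type*} [Fintype A] [Fintype B] [Fintype n]
    (T : Matrix A A ℂ →ₗ[ℂ] Matrix B B ℂ) (M : Matrix (A × n) (A × n) ℂ) :
    Matrix (B × n) (B × n) ℂ :=
  Matrix.of fun i j => T (Matrix.of fun a a' => M (a, i.2) (a', j.2)) i.1 j.1

/-- Complete positivity of a linear map on matrices. -/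
def IsCPM {A B : Type*} [Fintype A] [Fintype B]
    (T : Matrix A A ℂ →ₗ[ℂ] Matrix B B ℂ) : Prop :=
  ∀ (n : ℕ) (M : Matrix (Fin n × A) (Fin n × A) ℂ),
    M.PosSemidef → (idTensorLmap T M).PosSemidef

/-- The projector `|Φ⟩⟨Φ|` onto the maximally entangled state
`|Φ⟩ = |A|^{-1/2} ∑ₓ |x⟩|x⟩`. -/
def maxEntProj (A : Type*) [Fintype A] [DecidableEq A] : Matrix (A × A) (A × A) ℂ :=
  Matrix.of fun p q =>
    ((if p.1 = p.2 then 1 else 0) * (if q.1 = q.2 then 1 else 0)) / (Fintype.card A : ℂ)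

/-- Choi–Jamiołkowski representation `J(T) = (𝟙_{A'} ⊗ T)(|Φ⟩⟨Φ|)`. -/
def choi {A B : Type*} [Fintype A] [Fintype B] [DecidableEq A]
    (T : Matrix A A ℂ →ₗ[ℂ] Matrix B B ℂ) : Matrix (A × B) (A × B) ℂ :=
  idTensorLmap T (maxEntProj A)

/-- Conjugation of a bipartite operator by `U ⊗ 𝟙_E`. -/
def conjFst {A E : Type*} [Fintype A] [Fintype E] [DecidableEq A] [DecidableEq E]
    (U : Matrix.unitaryGroup A ℂ) (ρ : Matrix (A × E) (A × E) ℂ) :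
    Matrix (A × E) (A × E) ℂ :=
  ((U : Matrix A A ℂ) ⊗ₖ (1 : Matrix E E ℂ)) * ρ *
    (((U : Matrix A A ℂ)ᴴ) ⊗ₖ (1 : Matrix E E ℂ))

/-- The swap operator `F(u ⊗ v) = v ⊗ u` as a matrix. -/
def swapMat (A : Type*) [Fintype A] [DecidableEq A] : Matrix (A × A) (A × A) ℂ :=
  Matrix.of fun i j => if i.1 = j.2 ∧ i.2 = j.1 then 1 else 0


attribute [local instance] Matrix.frobeniusNormedAddCommGroup Matrix.frobeniusNormedSpace


lemma Matrix.IsHermitian.trace_mul_self_eq_sum_norm_sq {n : Type*} [Fintype n]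
    {M : Matrix n n ℂ} (hM : M.IsHermitian) :
    (M * M).trace = ((∑ i, ∑ j, ‖M i j‖ ^ 2 : ℝ) : ℂ) := by
  simp only [trace, diag, mul_apply]
  push_cast
  refine Finset.sum_congr rfl fun i _ => Finset.sum_congr rfl fun j _ => ?_
  rw [← hM.apply j i, Complex.star_def, Complex.mul_conj']

lemma Matrix.PosSemidef.dotProduct_mulVec_sum_le {n ι : Type*} [Fintype n]
    {M : Matrix n n ℂ} (hM : M.PosSemidef) (s : Finset ι) (w : ι → n → ℂ) :
    star (∑ a ∈ s, w a) ⬝ᵥ (M *ᵥ ∑ a ∈ s, w a) ≤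
      s.card * ∑ a ∈ s, star (w a) ⬝ᵥ (M *ᵥ w a) := by
  set Q : (n → ℂ) → (n → ℂ) → ℂ := fun x y => star x ⬝ᵥ (M *ᵥ y) with hQ
  have expand : ∑ a ∈ s, ∑ b ∈ s, Q (w a - w b) (w a - w b) =
      2 * (s.card * ∑ a ∈ s, Q (w a) (w a) - Q (∑ a ∈ s, w a) (∑ a ∈ s, w a)) := by
    simp only [hQ, star_sub, sub_dotProduct, mulVec_sub, dotProduct_sub, Finset.sum_sub_distrib,
      star_sum, sum_dotProduct, mulVec_sum, dotProduct_sum, Finset.sum_const, nsmul_eq_mul]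
    rw [Finset.sum_comm (s := s) (t := s) (f := fun a b => star (w b) ⬝ᵥ (M *ᵥ w a)),
      ← Finset.mul_sum]
    ring
  have nonneg : 0 ≤ ∑ a ∈ s, ∑ b ∈ s, Q (w a - w b) (w a - w b) :=
    Finset.sum_nonneg fun a _ => Finset.sum_nonneg fun b _ => hM.dotProduct_mulVec_nonneg _
  have half := mul_nonneg (inv_nonneg.mpr zero_le_two) (expand ▸ nonneg)
  rwa [inv_mul_cancel_left₀ two_ne_zero, sub_nonneg] at half

open scoped MatrixOrder in
lemma Matrix.PosSemidef.trace_mul_mono {n : Type*} [Fintype n] [DecidableEq n]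
    {ξ X Y : Matrix n n ℂ} (hξ : ξ.PosSemidef) (hXY : X ≤ Y) :
    (ξ * X).trace ≤ (ξ * Y).trace := by
  obtain ⟨S, hS, hSS⟩ : ∃ S : Matrix n n ℂ, S.IsHermitian ∧ S * S = ξ :=
    ⟨CFC.sqrt ξ, (CFC.sqrt_nonneg ξ).posSemidef.isHermitian, CFC.sqrt_mul_sqrt_self ξ hξ.nonneg⟩
  have hSDS : (S * (Y - X) * S).PosSemidef := by
    simpa only [hS.eq] using (le_iff.mp hXY).conjTranspose_mul_mul_same S
  rw [← sub_nonneg, ← trace_sub, ← mul_sub, ← hSS, ← trace_mul_cycle]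
  exact hSDS.trace_nonneg

section PartialTrace

variable {A B : Type*} [Fintype A]

lemma ptraceFst_eq_sum_submatrix (M : Matrix (A × B) (A × B) ℂ) :
    ptraceFst M = ∑ k, M.submatrix (Prod.mk k) (Prod.mk k) := by
  ext i j
  simp [ptraceFst, Matrix.sum_apply]

lemma posSemidef_ptraceFst {M : Matrix (A × B) (A × B) ℂ} (hM : M.PosSemidef) :
    (ptraceFst M).PosSemidef := by
  rw [ptraceFst_eq_sum_submatrix]
  exact posSemidef_sum _ fun k _ => hM.submatrix _

variable [Fintype B]

lemma sum_norm_sq_ptraceFst_le (M : Matrix (A × B) (A × B) ℂ) :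
    ∑ i, ∑ j, ‖ptraceFst M i j‖ ^ 2 ≤ Fintype.card A * ∑ p, ∑ q, ‖M p q‖ ^ 2 := by
  have entry (i j : B) :
      ‖ptraceFst M i j‖ ^ 2 ≤ Fintype.card A * ∑ k, ‖M (k, i) (k, j)‖ ^ 2 :=
    (pow_le_pow_left₀ (norm_nonneg _) (norm_sum_le _ _) 2).trans
      (sq_sum_le_card_mul_sum_sq ..)
  have row (p : A × B) : ∑ j, ‖M p (p.1, j)‖ ^ 2 ≤ ∑ q, ‖M p q‖ ^ 2 := by
    rw [Fintype.sum_prod_type]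
    exact Finset.single_le_sum (f := fun l => ∑ j, ‖M p (l, j)‖ ^ 2)
      (fun _ _ => by positivity) (Finset.mem_univ _)
  calc ∑ i, ∑ j, ‖ptraceFst M i j‖ ^ 2
      ≤ ∑ i, ∑ j, Fintype.card A * ∑ k, ‖M (k, i) (k, j)‖ ^ 2 := by
        gcongr with i _ j _; exact entry i j
    _ = Fintype.card A * ∑ p : A × B, ∑ j, ‖M p (p.1, j)‖ ^ 2 := by
        simp only [← Finset.mul_sum, Fintype.sum_prod_type]
        congr 1
        exact (Finset.sum_congr rfl fun _ _ => Finset.sum_comm).trans Finset.sum_comm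
    _ ≤ Fintype.card A * ∑ p, ∑ q, ‖M p q‖ ^ 2 := by gcongr with p; exact row p

variable [DecidableEq A]

lemma trace_mul_one_kronecker (M : Matrix (A × B) (A × B) ℂ) (N : Matrix B B ℂ) :
    (M * ((1 : Matrix A A ℂ) ⊗ₖ N)).trace = (ptraceFst M * N).trace := by
  simp only [trace, diag_apply, mul_apply, kroneckerMap_apply, one_apply, ite_mul, one_mul,
    zero_mul, mul_ite, mul_zero, Fintype.sum_prod_type, Finset.sum_ite_irrel,
    Finset.sum_const_zero, Finset.sum_ite_eq', Finset.mem_univ, ↓reduceIte, ptraceFst, of_apply,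
    Finset.sum_mul]
  exact Finset.sum_comm.trans (Finset.sum_congr rfl fun _ _ => Finset.sum_comm)

lemma dotProduct_one_kronecker_mulVec (N : Matrix B B ℂ) (v : A × B → ℂ) :
    star v ⬝ᵥ (((1 : Matrix A A ℂ) ⊗ₖ N) *ᵥ v) =
      ∑ a, star (Function.curry v a) ⬝ᵥ (N *ᵥ Function.curry v a) := by
  simp [dotProduct, mulVec, Fintype.sum_prod_type, one_apply, ite_mul, Finset.mul_sum]

lemma dotProduct_mulVec_uncurry_single (M : Matrix (A × B) (A × B) ℂ) (k : A) (x : B → ℂ) :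
    star (Function.uncurry (Pi.single k x)) ⬝ᵥ (M *ᵥ Function.uncurry (Pi.single k x)) =
      star x ⬝ᵥ (M.submatrix (Prod.mk k) (Prod.mk k) *ᵥ x) := by
  simp [dotProduct, mulVec, Fintype.sum_prod_type, Pi.single_apply, ite_apply, apply_ite,
    ite_mul, Finset.mul_sum]

open scoped MatrixOrder in
lemma Matrix.PosSemidef.le_card_smul_one_kronecker_ptraceFst
    {ξ : Matrix (A × B) (A × B) ℂ} (hξ : ξ.PosSemidef) :
    ξ ≤ Fintype.card A • ((1 : Matrix A A ℂ) ⊗ₖ ptraceFst ξ) := by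
  set σ := ptraceFst ξ
  have hσ : ((1 : Matrix A A ℂ) ⊗ₖ σ).PosSemidef :=
    PosSemidef.one.kronecker (posSemidef_ptraceFst hξ)
  refine le_iff.mpr (.of_dotProduct_mulVec_nonneg
    ((hσ.smul (Nat.zero_le (Fintype.card A))).isHermitian.sub hξ.isHermitian) fun v => ?_)
  rw [sub_mulVec, dotProduct_sub, sub_nonneg, smul_mulVec, dotProduct_smul, nsmul_eq_mul]
  set block : A → A × B → ℂ := fun a => Function.uncurry (Pi.single a (Function.curry v a))
  have sum_block : ∑ a, block a = v := by
    ext ⟨a, b⟩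
    simp [block, Finset.sum_apply, Pi.single_apply, ite_apply]
  have block_nonneg (a k : A) : 0 ≤ star (Function.curry v a) ⬝ᵥ
      (ξ.submatrix (Prod.mk k) (Prod.mk k) *ᵥ Function.curry v a) :=
    (hξ.submatrix _).dotProduct_mulVec_nonneg _
  calc star v ⬝ᵥ (ξ *ᵥ v)
      ≤ Fintype.card A * ∑ a, star (block a) ⬝ᵥ (ξ *ᵥ block a) := by
        simpa only [sum_block, Finset.card_univ] using
          hξ.dotProduct_mulVec_sum_le Finset.univ block
    _ = Fintype.card A * ∑ a, star (Function.curry v a) ⬝ᵥ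
          (ξ.submatrix (Prod.mk a) (Prod.mk a) *ᵥ Function.curry v a) := by
        simp only [block, dotProduct_mulVec_uncurry_single]
    _ ≤ Fintype.card A * ∑ a, ∑ k, star (Function.curry v a) ⬝ᵥ
          (ξ.submatrix (Prod.mk k) (Prod.mk k) *ᵥ Function.curry v a) := by
        gcongr with a
        exact Finset.single_le_sum (fun k _ => block_nonneg a k) (Finset.mem_univ a)
    _ = Fintype.card A * (star v ⬝ᵥ (((1 : Matrix A A ℂ) ⊗ₖ σ) *ᵥ v)) := by
        simp only [dotProduct_one_kronecker_mulVec, σ, ptraceFst_eq_sum_submatrix, sum_mulVec,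
          dotProduct_sum]

end PartialTrace

/-- **Purity ratio bound.** -/
theorem purity_ratio_bound
    {A B : Type*} [Fintype A] [DecidableEq A] [Fintype B] [DecidableEq B]
    (ξ : Matrix (A × B) (A × B) ℂ) (hξ : ξ.PosSemidef) :
    (ptraceFst ξ ^ 2).trace ≤ (Fintype.card A : ℂ) * (ξ ^ 2).trace ∧
    (ξ ^ 2).trace ≤ (Fintype.card A : ℂ) * (ptraceFst ξ ^ 2).trace := by
  constructor
  · rw [sq, sq, (posSemidef_ptraceFst hξ).isHermitian.trace_mul_self_eq_sum_norm_sq,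
      hξ.isHermitian.trace_mul_self_eq_sum_norm_sq]
    exact_mod_cast sum_norm_sq_ptraceFst_le ξ
  · calc (ξ ^ 2).trace = (ξ * ξ).trace := by rw [sq]
      _ ≤ (ξ * (Fintype.card A • ((1 : Matrix A A ℂ) ⊗ₖ ptraceFst ξ))).trace :=
        hξ.trace_mul_mono hξ.le_card_smul_one_kronecker_ptraceFst
      _ = Fintype.card A * (ptraceFst ξ ^ 2).trace := by
        rw [mul_smul_comm, trace_smul, trace_mul_one_kronecker, sq, nsmul_eq_mul]

end
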